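/- Let G = (ℤ/2ℤ)^k with k ≥ 2 and dual basis ε_1,…,ε_k. Suppose nonnegative integers (l_χ) and (d_g) with l_0 = d_0 = 0 satisfy l_χ = (1/2)Σ_{g: χ(g)≠1} d_g for all χ, l_{ε_1} = l_{ε_2} = l_{ε_1+ε_2} = 3, and l_χ ∈ {1,2} for all χ ∉ ⟨ε_1, ε_2⟩. If moreover Σ_{g ∈ ker ε_1 ∩ ker ε_2} d_g = d − 9 ≥ 0 where d = Σ_g d_g, then k = 2, d = 9, and d_g = 3 for all nonzero g ∈ G. -/
import Mathlib


/-- For `G = (ℤ/2ℤ)^k`, identify the character group `G*` with `G` via the pairing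
`pair χ g = ∑ χᵢ·gᵢ ∈ ℤ/2`; the character `χ` satisfies `χ(g) = 1` iff `pair χ g = 0`. -/
def pair {k : ℕ} (χ g : Fin k → ZMod 2) : ZMod 2 := ∑ i, χ i * g i

/-- The `(m+1)`-st standard basis vector of `(ℤ/2ℤ)^k`; `eVec k 0, eVec k 1`
play the roles of `ε₁, ε₂`. -/
def eVec (k m : ℕ) : Fin k → ZMod 2 := fun j => if (j : ℕ) = m then 1 else 0

lemma pair_add {k : ℕ} (χ ψ g : Fin k → ZMod 2) :
    pair (χ + ψ) g = pair χ g + pair ψ g := by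
  simp [pair, add_mul, Finset.sum_add_distrib]

lemma pair_eVec {k m : ℕ} (hm : m < k) (g : Fin k → ZMod 2) :
    pair (eVec k m) g = g ⟨m, hm⟩ := by
  unfold pair eVec
  rw [Finset.sum_eq_single ⟨m, hm⟩]
  · simp
  · intro j _ hj
    have : (j : ℕ) ≠ m := fun h => hj (Fin.ext h)
    simp [this]
  · simp

lemma key (a b c : ZMod 2) (n : ℕ) :
    (if a ≠ 0 then n else 0) + (if b ≠ 0 then n else 0) + (if a + b ≠ 0 then n else 0)
      ≤ (if c ≠ 0 then n else 0) + (if a + c ≠ 0 then n else 0)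
        + (if b + c ≠ 0 then n else 0) + (if a + b + c ≠ 0 then n else 0) := by
  have h : ∀ x : ZMod 2, x = 0 ∨ x = 1 := by decide
  rcases h a with rfl | rfl <;> rcases h b with rfl | rfl <;> rcases h c with rfl | rfl <;>
    simp [show (1:ZMod 2)+1 = 0 from by decide]

/-- numerical classification of type B smooth `k`-double planes with
`p_g = 3` (family B2): `k = 2`, `d = 9` and `d_g = 3` for all nonzero `g`. -/
theorem stmt_10 (k : ℕ) (hk : 2 ≤ k)
    (l d : (Fin k → ZMod 2) → ℕ)
    (hl0 : l 0 = 0) (hd0 : d 0 = 0)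
    (hld : ∀ χ, 2 * l χ = ∑ g ∈ Finset.univ.filter (fun g => pair χ g ≠ 0), d g)
    (h1 : l (eVec k 0) = 3) (h2 : l (eVec k 1) = 3) (h12 : l (eVec k 0 + eVec k 1) = 3)
    (hrest : ∀ χ, χ ∉ ({0, eVec k 0, eVec k 1, eVec k 0 + eVec k 1} :
        Set (Fin k → ZMod 2)) → l χ = 1 ∨ l χ = 2)
    (hker : (∑ g ∈ Finset.univ.filter
        (fun g => pair (eVec k 0) g = 0 ∧ pair (eVec k 1) g = 0), (d g : ℤ)) =
      (∑ g : Fin k → ZMod 2, (d g : ℤ)) - 9)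
    (hd9 : 9 ≤ ∑ g : Fin k → ZMod 2, d g) :
    k = 2 ∧ (∑ g : Fin k → ZMod 2, d g) = 9 ∧ ∀ g, g ≠ 0 → d g = 3 := by
  -- Step 1: k = 2
  have hk2 : k = 2 := by
    by_contra hne
    have h3 : 2 < k := lt_of_le_of_ne hk (Ne.symm hne)
    have h0k : 0 < k := by omega
    have h1k : 1 < k := by omega
    set i2 : Fin k := ⟨2, h3⟩
    -- the four new characters
    set e0 := eVec k 0
    set e1 := eVec k 1
    set e2 := eVec k 2
    have he2 : ∀ χ ∈ ({0, e0, e1, e0 + e1} : Set (Fin k → ZMod 2)), χ i2 = 0 := by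
      intro χ hχ
      rcases hχ with rfl | rfl | rfl | rfl <;> simp [e0, e1, eVec, i2, Pi.add_apply]
    have hv1 : ∀ χ ∈ ({e2, e0 + e2, e1 + e2, e0 + e1 + e2} : Set (Fin k → ZMod 2)),
        χ i2 = 1 := by
      intro χ hχ
      rcases hχ with rfl | rfl | rfl | rfl <;> simp [e0, e1, e2, eVec, i2, Pi.add_apply]
    have hnot : ∀ χ ∈ ({e2, e0 + e2, e1 + e2, e0 + e1 + e2} : Set (Fin k → ZMod 2)),
        l χ ≤ 2 := by
      intro χ hχ
      have := hrest χ (fun hmem => by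
        have := he2 χ hmem
        rw [hv1 χ hχ] at this
        exact one_ne_zero this)
      omega
    -- sums
    have hS : ∀ χ : Fin k → ZMod 2,
        (∑ g ∈ Finset.univ.filter (fun g => pair χ g ≠ 0), d g)
          = ∑ g : Fin k → ZMod 2, (if pair χ g ≠ 0 then d g else 0) :=
      fun χ => Finset.sum_filter _ _
    have hineq :
        (∑ g : Fin k → ZMod 2, (if pair e0 g ≠ 0 then d g else 0))
          + (∑ g : Fin k → ZMod 2, (if pair e1 g ≠ 0 then d g else 0))
          + (∑ g : Fin k → ZMod 2, (if pair (e0 + e1) g ≠ 0 then d g else 0))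
        ≤ (∑ g : Fin k → ZMod 2, (if pair e2 g ≠ 0 then d g else 0))
          + (∑ g : Fin k → ZMod 2, (if pair (e0 + e2) g ≠ 0 then d g else 0))
          + (∑ g : Fin k → ZMod 2, (if pair (e1 + e2) g ≠ 0 then d g else 0))
          + (∑ g : Fin k → ZMod 2, (if pair (e0 + e1 + e2) g ≠ 0 then d g else 0)) := by
      rw [← Finset.sum_add_distrib, ← Finset.sum_add_distrib,
        ← Finset.sum_add_distrib, ← Finset.sum_add_distrib, ← Finset.sum_add_distrib]
      apply Finset.sum_le_sum
      intro g _
      have ha := pair_eVec h0k g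
      have hb := pair_eVec h1k g
      have hc := pair_eVec h3 g
      simp only [pair_add, ha, hb, hc]
      exact key _ _ _ _
    have e18 : 2 * l e0 + 2 * l e1 + 2 * l (e0 + e1) = 18 := by
      rw [h1, h2, h12]
    rw [hld e0, hld e1, hld (e0+e1), hS, hS, hS] at e18
    have hle : 2 * l e2 + 2 * l (e0 + e2) + 2 * l (e1 + e2) + 2 * l (e0 + e1 + e2) ≤ 16 := by
      have q1 := hnot e2 (by left; rfl)
      have q2 := hnot (e0 + e2) (by right; left; rfl)
      have q3 := hnot (e1 + e2) (by right; right; left; rfl)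
      have q4 := hnot (e0 + e1 + e2) (by right; right; right; rfl)
      omega
    rw [hld e2, hld (e0+e2), hld (e1+e2), hld (e0+e1+e2), hS, hS, hS, hS] at hle
    omega
  subst hk2
  -- Step 2: explicit computation over Fin 2 → ZMod 2
  have huniv : (Finset.univ : Finset (Fin 2 → ZMod 2))
      = {![0,0], ![1,0], ![0,1], ![1,1]} := by decide
  have hsum : ∀ f : (Fin 2 → ZMod 2) → ℕ,
      (∑ g : Fin 2 → ZMod 2, f g) = f ![0,0] + f ![1,0] + f ![0,1] + f ![1,1] := by
    intro f
    rw [huniv]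
    rw [Finset.sum_insert (by decide), Finset.sum_insert (by decide),
      Finset.sum_insert (by decide), Finset.sum_singleton]
    ring
  have hz : (0 : Fin 2 → ZMod 2) = ![0,0] := by decide
  have hd00 : d ![0,0] = 0 := by rw [← hz]; exact hd0
  have hS : ∀ χ : Fin 2 → ZMod 2,
      (∑ g ∈ Finset.univ.filter (fun g => pair χ g ≠ 0), d g)
        = ∑ g : Fin 2 → ZMod 2, (if pair χ g ≠ 0 then d g else 0) :=
    fun χ => Finset.sum_filter _ _
  have q1 := hld (eVec 2 0); rw [h1, hS, hsum] at q1
  have q2 := hld (eVec 2 1); rw [h2, hS, hsum] at q2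
  have q3 := hld (eVec 2 0 + eVec 2 1); rw [h12, hS, hsum] at q3
  have p1 : ∀ g : Fin 2 → ZMod 2, pair (eVec 2 0) g = g 0 := fun g => pair_eVec (by norm_num) g
  have p2 : ∀ g : Fin 2 → ZMod 2, pair (eVec 2 1) g = g 1 := fun g => pair_eVec (by norm_num) g
  rw [p1, p1, p1, p1] at q1
  rw [p2, p2, p2, p2] at q2
  simp only [pair_add, p1, p2] at q3
  norm_num [show ((1:ZMod 2)) ≠ 0 from by decide, show ((1:ZMod 2))+1 = 0 from by decide,
    hd00] at q1 q2 q3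
  have hb : d ![1,0] = 3 := by omega
  have hc : d ![0,1] = 3 := by omega
  have he : d ![1,1] = 3 := by omega
  refine ⟨rfl, ?_, ?_⟩
  · rw [hsum]; omega
  · intro g hg
    have hmem : g ∈ ({![0,0], ![1,0], ![0,1], ![1,1]} : Finset (Fin 2 → ZMod 2)) := by
      rw [← huniv]; exact Finset.mem_univ g
    simp only [Finset.mem_insert, Finset.mem_singleton] at hmem
    rcases hmem with rfl | rfl | rfl | rfl
    · exact absurd hz.symm hg
    · exact hb
    · exact hc
    · exact he
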